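/- arXiv:1308.5411 — 2 statements merged into one kernel-verified Lean document; each statement's English description precedes it below -/
import Mathlib

section
/- Let F be a self-adjoint bounded operator with 1 − F² compact. Then the loop s ↦ susp(F)(s), defined as cos(s) + i·sin(s)·F for s ∈ [0,π] and cos(s) + i·sin(s) for s ∈ [π,2π], consists of Fredholm operators for every s ∈ [0,2π], and agrees at the endpoints s = 0 and s = 2π (both equal to the identity up to the value 1), giving a continuous loop in the Fredholm operators based at invertible operators. -/
/-!
On `[0, π]` the loop is `c + i t F` with `c = cos s`, `t = sin s`, and `c - i t F` inverts it
modulo compacts: since `c² + t² = 1`, both products differ from `1` by `t² (1 - F²)`.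
On `[π, 2π]` the loop is the same expression with `F` replaced by `1`, for which `1 - 1² = 0`,
so the same parametrix applies. The two halves agree at `s = π`, where both equal `-1`.
-/

open Complex

section ConjugateProducts

variable {A : Type*} [Ring A] [Algebra ℂ A] {c t : ℂ}

theorem one_sub_mul_conj_eq (h : c ^ 2 + t ^ 2 = 1) (x : A) :
    1 - (c • 1 + (I * t) • x) * (c • 1 - (I * t) • x) = t ^ 2 • (1 - x * x) := by
  simp only [mul_sub, add_mul, smul_mul_smul_comm, mul_one, one_mul]
  linear_combination (norm := module) (-h) • (1 : A) + (t ^ 2 * I_sq) • (x * x)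

theorem one_sub_conj_mul_eq (h : c ^ 2 + t ^ 2 = 1) (x : A) :
    1 - (c • 1 - (I * t) • x) * (c • 1 + (I * t) • x) = t ^ 2 • (1 - x * x) := by
  simp only [mul_add, sub_mul, smul_mul_smul_comm, mul_one, one_mul]
  linear_combination (norm := module) (-h) • (1 : A) + (t ^ 2 * I_sq) • (x * x)

end ConjugateProducts

section Suspension

variable {E : Type*} [NormedAddCommGroup E] [NormedSpace ℂ E]

def HasCompactParametrix (T : E →L[ℂ] E) : Prop :=
  ∃ B : E →L[ℂ] E, IsCompactOperator ((1 : E →L[ℂ] E) - T ∘L B) ∧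
    IsCompactOperator ((1 : E →L[ℂ] E) - B ∘L T)

noncomputable def suspensionOp (G : E →L[ℂ] E) (s : ℝ) : E →L[ℂ] E :=
  ((Real.cos s : ℝ) : ℂ) • 1 + (I * (Real.sin s : ℝ)) • G

theorem hasCompactParametrix_suspensionOp {G : E →L[ℂ] E}
    (hG : IsCompactOperator ((1 : E →L[ℂ] E) - G ∘L G)) (s : ℝ) : HasCompactParametrix (suspensionOp G s) := by
  have hcs : ((Real.cos s : ℝ) : ℂ) ^ 2 + ((Real.sin s : ℝ) : ℂ) ^ 2 = 1 := by
    exact_mod_cast Real.cos_sq_add_sin_sq s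
  refine ⟨((Real.cos s : ℝ) : ℂ) • 1 - (I * (Real.sin s : ℝ)) • G, ?_, ?_⟩
  · rw [← ContinuousLinearMap.mul_def, suspensionOp, one_sub_mul_conj_eq hcs]
    exact hG.smul _
  · rw [← ContinuousLinearMap.mul_def, suspensionOp, one_sub_conj_mul_eq hcs]
    exact hG.smul _

theorem continuous_suspensionOp (G : E →L[ℂ] E) : Continuous (suspensionOp G) := by
  unfold suspensionOp
  fun_prop

theorem suspensionOp_zero (G : E →L[ℂ] E) : suspensionOp G 0 = 1 := by
  simp [suspensionOp]

theorem suspensionOp_pi (G : E →L[ℂ] E) : suspensionOp G Real.pi = -1 := by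
  simp [suspensionOp]

theorem suspensionOp_one_two_pi : suspensionOp (1 : E →L[ℂ] E) (2 * Real.pi) = 1 := by
  simp [suspensionOp]

end Suspension

theorem suspension_loop_fredholm_general
    {H : Type*} [NormedAddCommGroup H] [InnerProductSpace ℂ H]
    (F : H →L[ℂ] H)
    (hc : IsCompactOperator ((1 : H →L[ℂ] H) - F ∘L F)) :
    let susp : ℝ → H →L[ℂ] H := fun s =>
      if s ≤ Real.pi then ((Real.cos s : ℝ) : ℂ) • 1 + (Complex.I * (Real.sin s : ℝ)) • F
      else (((Real.cos s : ℝ) : ℂ) + Complex.I * (Real.sin s : ℝ)) • 1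
    (∀ s ∈ Set.Icc (0 : ℝ) (2 * Real.pi), ∃ B : H →L[ℂ] H,
        IsCompactOperator ((1 : H →L[ℂ] H) - susp s ∘L B) ∧
        IsCompactOperator ((1 : H →L[ℂ] H) - B ∘L susp s)) ∧
    susp 0 = 1 ∧ susp (2 * Real.pi) = 1 ∧
    ContinuousOn susp (Set.Icc (0 : ℝ) (2 * Real.pi)) := by
  intro susp
  have hsusp : susp = fun s => if s ≤ Real.pi then suspensionOp F s else suspensionOp 1 s := by
    funext s
    simp only [susp, suspensionOp, add_smul]
  simp only [hsusp]
  refine ⟨fun s _ => ?_, by simp [suspensionOp_zero, Real.pi_pos.le], ?_, ?_⟩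
  · split_ifs
    · exact hasCompactParametrix_suspensionOp hc s
    · exact hasCompactParametrix_suspensionOp (by
        rw [← ContinuousLinearMap.mul_def, mul_one, sub_self]; exact isCompactOperator_zero) s
  · rw [if_neg (by linarith [Real.pi_pos]), suspensionOp_one_two_pi]
  · refine (Continuous.if_le (continuous_suspensionOp F) (continuous_suspensionOp 1)
      continuous_id continuous_const fun s (hs : s = Real.pi) => ?_).continuousOn
    rw [hs, suspensionOp_pi, suspensionOp_pi]

/-- For a self-adjoint bounded `F` with `1 - F²` compact, the APS suspension
loop `susp(F)(s)` (equal to `cos s + i sin s · F` for `s ∈ [0,π]` and to the scalar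
`cos s + i sin s` for `s ∈ [π,2π]`) consists of Fredholm operators (each admits a
parametrix modulo compacts), takes the value `1` at both endpoints `s = 0` and `s = 2π`
(an invertible operator), and is continuous on `[0, 2π]`. -/
theorem suspension_loop_fredholm
    {H : Type*} [NormedAddCommGroup H] [InnerProductSpace ℂ H] [CompleteSpace H]
    (F : H →L[ℂ] H) (hF : IsSelfAdjoint F)
    (hc : IsCompactOperator ((1 : H →L[ℂ] H) - F ∘L F)) :
    let susp : ℝ → H →L[ℂ] H := fun s =>
      if s ≤ Real.pi then ((Real.cos s : ℝ) : ℂ) • 1 + (Complex.I * (Real.sin s : ℝ)) • F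
      else (((Real.cos s : ℝ) : ℂ) + Complex.I * (Real.sin s : ℝ)) • 1
    (∀ s ∈ Set.Icc (0 : ℝ) (2 * Real.pi), ∃ B : H →L[ℂ] H,
        IsCompactOperator ((1 : H →L[ℂ] H) - susp s ∘L B) ∧
        IsCompactOperator ((1 : H →L[ℂ] H) - B ∘L susp s)) ∧
    susp 0 = 1 ∧ susp (2 * Real.pi) = 1 ∧
    ContinuousOn susp (Set.Icc (0 : ℝ) (2 * Real.pi)) :=
  suspension_loop_fredholm_general F hc
end

section
/- Let ψ_n (n ∈ ℤ) be elements of an associative complex algebra with relations {ψ_n, ψ_m} = 2δ_{n,−m}, and let e_n (n ∈ ℤ) be elements of another associative algebra with [e_n, e_m] = −n·δ_{n,−m}·1. In the tensor product algebra, set Q(φ) = Σ_k ψ_k ⊗ e_{−k} + (φ/2π)·ψ₀ ⊗ 1 (a finite truncation Σ_{|k| ≤ N} suffices for the algebraic identity). Then Q(φ)² = Σ_{n=1}^{N} n·ψ_n ψ_{−n} ⊗ 1 + 2·Σ_{k=1}^{N} 1 ⊗ e_k e_{−k} + 1 ⊗ (e₀ + φ/2π)², where ψ₀² = 1 is used and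 e₀ commutes with ψ₀. -/
/-!
`Q(φ)²` is the sum of the squares of the summands `q_k = ψ_k ⊗ e_{-k}` and of their pairwise
anticommutators. By the Clifford and Heisenberg relations `q_k² = 0` for `k ≠ 0` and
`{q_k, q_l} = 0` unless `k + l = 0`, while `{q_k, q_{-k}} = k ψ_k ψ_{-k} ⊗ 1 + 2 ⊗ e_k e_{-k}`.
The term `(φ/2π) ψ₀ ⊗ 1` is absorbed into `q₀` by replacing `e₀` with `e₀ + φ/2π`, which
preserves the Heisenberg relations.
-/

open TensorProduct Finset

theorem sq_add_add_of_anticomm {R : Type*} [Ring R] {a b s : R} (ha : a * a = 0) (hb : b * b = 0)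
    (hsa : s * a + a * s = 0) (hsb : s * b + b * s = 0) :
    (a + (b + s)) ^ 2 = a * b + b * a + s ^ 2 := by
  calc (a + (b + s)) ^ 2
      = a * b + b * a + s ^ 2 + (s * a + a * s) + (s * b + b * s) + a * a + b * b := by
        noncomm_ring
    _ = a * b + b * a + s ^ 2 := by rw [ha, hb, hsa, hsb]; abel

theorem sq_sum_Icc_of_anticomm {R : Type*} [Ring R] (q : ℤ → R)
    (hanti : ∀ k l, k + l ≠ 0 → q k * q l + q l * q k = 0) (hsq : ∀ k ≠ 0, q k * q k = 0)
    (N : ℕ) :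
    (∑ k ∈ Icc (-(N : ℤ)) N, q k) ^ 2
      = q 0 ^ 2 + ∑ k ∈ Icc (1 : ℤ) N, (q k * q (-k) + q (-k) * q k) := by
  induction N with
  | zero => simp
  | succ N ih =>
    have anticomm_sum (l : ℤ) (hl : N < |l|) :
        (∑ k ∈ Icc (-(N : ℤ)) N, q k) * q l + q l * ∑ k ∈ Icc (-(N : ℤ)) N, q k = 0 := by
      rw [sum_mul, mul_sum, ← sum_add_distrib]
      exact sum_eq_zero fun k hk ↦ hanti k l (by rw [mem_Icc] at hk; cases abs_cases l <;> omega)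
    have hIcc : Icc (-((N + 1 : ℕ) : ℤ)) (N + 1 : ℕ)
        = insert ((N : ℤ) + 1) (insert (-((N : ℤ) + 1)) (Icc (-(N : ℤ)) N)) := by
      ext; simp only [mem_Icc, mem_insert]; omega
    have hIcc' : Icc (1 : ℤ) (N + 1 : ℕ) = insert ((N : ℤ) + 1) (Icc (1 : ℤ) N) := by
      ext; simp only [mem_Icc, mem_insert]; omega
    rw [hIcc, hIcc', sum_insert (by simp; omega), sum_insert (by simp), sum_insert (by simp),
      add_left_comm (q 0 ^ 2), ← ih]
    exact sq_add_add_of_anticomm (hsq _ (by omega)) (hsq _ (by omega))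
      (anticomm_sum _ (by rw [abs_of_pos (by omega)]; omega))
      (anticomm_sum _ (by rw [abs_of_neg (by omega)]; omega))

section Relations

variable (R : Type*) {A : Type*} [CommRing R] [Ring A] [Algebra R A]

def IsCliffordFamily (ψ : ℤ → A) : Prop :=
  ∀ n m : ℤ, ψ n * ψ m + ψ m * ψ n = (if n + m = 0 then (2 : R) else 0) • 1

def IsHeisenbergFamily (e : ℤ → A) : Prop :=
  ∀ n m : ℤ, e n * e m - e m * e n = (if n + m = 0 then (-(n : R)) else 0) • 1

end Relations

namespace IsCliffordFamily

variable {R A : Type*} [CommRing R] [Ring A] [Algebra R A] {ψ : ℤ → A}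

theorem anticomm_of_add_ne_zero (hψ : IsCliffordFamily R ψ) {n m : ℤ} (hnm : n + m ≠ 0) :
    ψ n * ψ m + ψ m * ψ n = 0 := by
  simpa [hnm] using hψ n m

theorem anticomm_neg (hψ : IsCliffordFamily R ψ) (n : ℤ) :
    ψ (-n) * ψ n + ψ n * ψ (-n) = (2 : R) • 1 := by
  simpa using hψ (-n) n

variable [Invertible (2 : R)]

theorem mul_self_of_ne_zero (hψ : IsCliffordFamily R ψ) {n : ℤ} (hn : n ≠ 0) : ψ n * ψ n = 0 := by
  refine (isUnit_of_invertible (2 : R)).smul_left_cancel.mp ?_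
  rw [two_smul, smul_zero]
  simpa [hn] using hψ n n

theorem mul_self_zero (hψ : IsCliffordFamily R ψ) : ψ 0 * ψ 0 = 1 := by
  refine (isUnit_of_invertible (2 : R)).smul_left_cancel.mp ?_
  rw [two_smul]
  simpa using hψ 0 0

end IsCliffordFamily

namespace IsHeisenbergFamily

variable {R A : Type*} [CommRing R] [Ring A] [Algebra R A] {e : ℤ → A}

theorem comm_of_add_ne_zero (he : IsHeisenbergFamily R e) {n m : ℤ} (hnm : n + m ≠ 0) :
    e n * e m = e m * e n :=
  sub_eq_zero.mp (by simpa [hnm] using he n m)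

theorem update_zero (he : IsHeisenbergFamily R e) (c : R) :
    IsHeisenbergFamily R (Function.update e 0 (e 0 + c • 1)) := by
  intro n m
  rcases eq_or_ne n 0 with rfl | hn <;> rcases eq_or_ne m 0 with rfl | hm
  · simp
  · simpa [Function.update_of_ne hm, add_mul, mul_add, hm] using he 0 m
  · simpa [Function.update_of_ne hn, add_mul, mul_add, hn] using he n 0
  · simpa [Function.update_of_ne hn, Function.update_of_ne hm] using he n m

end IsHeisenbergFamily

section Tmul

open Algebra.TensorProduct

variable {R A B : Type*} [CommRing R] [Ring A] [Algebra R A] [Ring B] [Algebra R B]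

theorem tmul_mul_tmul_add_tmul_mul_tmul (a a' : A) (b b' : B) :
    a ⊗ₜ[R] b * a' ⊗ₜ[R] b' + a' ⊗ₜ[R] b' * a ⊗ₜ[R] b
      = (a * a' + a' * a) ⊗ₜ[R] (b * b') - (a' * a) ⊗ₜ[R] (b * b' - b' * b) := by
  simp only [tmul_mul_tmul, add_tmul, tmul_sub]
  abel

theorem sum_Icc_tmul_update_zero (ψ : ℤ → A) (e : ℤ → B) (c : R) (N : ℕ) :
    ∑ k ∈ Icc (-(N : ℤ)) N, ψ k ⊗ₜ[R] Function.update e 0 (e 0 + c • 1) (-k)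
      = ∑ k ∈ Icc (-(N : ℤ)) N, ψ k ⊗ₜ[R] e (-k) + c • (ψ 0 ⊗ₜ[R] (1 : B)) := by
  have h0 : (0 : ℤ) ∈ Icc (-(N : ℤ)) N := by simp
  rw [← add_sum_erase _ _ h0, ← add_sum_erase _ _ h0, neg_zero, Function.update_self, tmul_add,
    tmul_smul, add_right_comm]
  congr 2
  exact sum_congr rfl fun k hk ↦ by
    rw [Function.update_of_ne (neg_ne_zero.mpr (ne_of_mem_erase hk))]

variable [Invertible (2 : R)] {ψ : ℤ → A} {e : ℤ → B}

theorem sq_sum_Icc_tmul (hψ : IsCliffordFamily R ψ) (he : IsHeisenbergFamily R e) (N : ℕ) :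
    (∑ k ∈ Icc (-(N : ℤ)) N, ψ k ⊗ₜ[R] e (-k)) ^ 2
      = ∑ k ∈ Icc (1 : ℤ) N, ((k : R) • ((ψ k * ψ (-k)) ⊗ₜ[R] (1 : B))
          + 2 • ((1 : A) ⊗ₜ[R] (e k * e (-k))))
        + (1 : A) ⊗ₜ[R] (e 0 ^ 2) := by
  have hanti (k l : ℤ) (hkl : k + l ≠ 0) :
      ψ k ⊗ₜ[R] e (-k) * ψ l ⊗ₜ[R] e (-l) + ψ l ⊗ₜ[R] e (-l) * ψ k ⊗ₜ[R] e (-k) = 0 := by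
    rw [tmul_mul_tmul_add_tmul_mul_tmul, hψ.anticomm_of_add_ne_zero hkl,
      he.comm_of_add_ne_zero (by omega : -k + -l ≠ 0), sub_self, zero_tmul, tmul_zero, sub_zero]
  have hsq (k : ℤ) (hk : k ≠ 0) : ψ k ⊗ₜ[R] e (-k) * ψ k ⊗ₜ[R] e (-k) = 0 := by
    rw [tmul_mul_tmul, hψ.mul_self_of_ne_zero hk, zero_tmul]
  have hpair (k : ℤ) :
      ψ k ⊗ₜ[R] e (-k) * ψ (-k) ⊗ₜ[R] e (-(-k)) + ψ (-k) ⊗ₜ[R] e (-(-k)) * ψ k ⊗ₜ[R] e (-k)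
        = (k : R) • ((ψ k * ψ (-k)) ⊗ₜ[R] (1 : B)) + 2 • ((1 : A) ⊗ₜ[R] (e k * e (-k))) := by
    rw [add_comm, neg_neg, tmul_mul_tmul_add_tmul_mul_tmul, hψ.anticomm_neg, he k (-k),
      if_pos (add_neg_cancel k), ← smul_tmul', tmul_smul, two_smul, two_smul]
    module
  rw [sq_sum_Icc_of_anticomm _ hanti hsq, add_comm, sq, tmul_mul_tmul, hψ.mul_self_zero, neg_zero,
    ← sq]
  exact congrArg (· + _) (sum_congr rfl fun k _ ↦ hpair k)

end Tmul

/-- The square of the (truncated) odd supercharge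
`Q(φ) = Σ_{|k|≤N} ψ_k ⊗ e_{-k} + (φ/2π)·ψ₀ ⊗ 1` in the tensor product of a Clifford
algebra (`{ψ_n, ψ_m} = 2δ_{n,-m}`) and a Heisenberg algebra (`[e_n, e_m] = -n δ_{n,-m}`)
equals `Σ_{n=1}^N n·ψ_nψ_{-n} ⊗ 1 + 2·Σ_{k=1}^N 1 ⊗ e_k e_{-k} + 1 ⊗ (e₀ + φ/2π)²`. -/
theorem supercharge_square
    {A B : Type*} [Ring A] [Algebra ℂ A] [Ring B] [Algebra ℂ B]
    (ψ : ℤ → A) (e : ℤ → B) (N : ℕ) (φ : ℝ)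
    (hψ : ∀ n m : ℤ, ψ n * ψ m + ψ m * ψ n = (if n + m = 0 then (2 : ℂ) else 0) • 1)
    (he : ∀ n m : ℤ, e n * e m - e m * e n = (if n + m = 0 then (-(n : ℂ)) else 0) • 1) :
    ∀ Q : A ⊗[ℂ] B,
    (Q = (∑ k ∈ Finset.Icc (-(N : ℤ)) (N : ℤ), ψ k ⊗ₜ[ℂ] e (-k))
        + ((φ / (2 * Real.pi) : ℝ) : ℂ) • (ψ 0 ⊗ₜ[ℂ] (1 : B))) →
    Q * Q = (∑ n ∈ Finset.Icc (1 : ℤ) (N : ℤ), (n : ℂ) • ((ψ n * ψ (-n)) ⊗ₜ[ℂ] (1 : B)))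
        + 2 • (∑ k ∈ Finset.Icc (1 : ℤ) (N : ℤ), (1 : A) ⊗ₜ[ℂ] (e k * e (-k)))
        + (1 : A) ⊗ₜ[ℂ] ((e 0 + ((φ / (2 * Real.pi) : ℝ) : ℂ) • 1) ^ 2) := by
  rintro Q rfl
  set c : ℂ := ((φ / (2 * Real.pi) : ℝ) : ℂ)
  rw [← sum_Icc_tmul_update_zero, ← sq, sq_sum_Icc_tmul hψ (IsHeisenbergFamily.update_zero he c),
    Function.update_self, sum_add_distrib, smul_sum]
  congr 2
  refine sum_congr rfl fun k hk ↦ ?_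
  rw [mem_Icc] at hk
  rw [Function.update_of_ne (by omega : k ≠ 0), Function.update_of_ne (by omega : -k ≠ 0)]
end
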